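/- Every element g of a graph product that is nontrivial has a well-defined syllable length: every minimal-length expression of g as a product g₁⋯g_l of nontrivial vertex-group elements has the same length l, and any two such minimal expressions are related by a sequence of swaps of adjacent syllables lying in commuting vertex groups. -/

import Mathlib

/-- The defining relators of a graph product: commutators of elements of
adjacent vertex groups, inside the free product. -/
def graphProductRels {V : Type*} (Γ : SimpleGraph V) (G : V → Type*)
    [∀ v, Group (G v)] : Subgroup (Monoid.CoprodI G) :=
  Subgroup.normalClosure
    {x | ∃ (v w : V) (gv : G v) (gw : G w), Γ.Adj v w ∧
      x = Monoid.CoprodI.of gv * Monoid.CoprodI.of gw *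
          (Monoid.CoprodI.of gv)⁻¹ * (Monoid.CoprodI.of gw)⁻¹}

/-- The graph product of the groups `G v` over the simple graph `Γ`: the
quotient of their free product by the normal closure of the commutators of
elements of adjacent vertex groups. -/
def GraphProduct {V : Type*} (Γ : SimpleGraph V) (G : V → Type*)
    [∀ v, Group (G v)] : Type _ :=
  Monoid.CoprodI G ⧸ graphProductRels Γ G

instance {V : Type*} (Γ : SimpleGraph V) (G : V → Type*) [∀ v, Group (G v)] :
    (graphProductRels Γ G).Normal :=
  Subgroup.normalClosure_normal

instance {V : Type*} (Γ : SimpleGraph V) (G : V → Type*) [∀ v, Group (G v)] :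
    Group (GraphProduct Γ G) :=
  QuotientGroup.Quotient.group _

/-- The canonical embedding of a vertex group into the graph product. -/
def GraphProduct.of {V : Type*} (Γ : SimpleGraph V) (G : V → Type*)
    [∀ v, Group (G v)] (v : V) : G v →* GraphProduct Γ G :=
  (QuotientGroup.mk' (graphProductRels Γ G)).comp Monoid.CoprodI.of

/-- `IsExpr Γ G g l` says that the list `l` of nontrivial vertex-group elements
(syllables) is an expression for `g` in the graph product. -/
def IsExpr {V : Type*} (Γ : SimpleGraph V) (G : V → Type*) [∀ v, Group (G v)]
    (g : GraphProduct Γ G) (l : List (Σ v, G v)) : Prop :=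
  (∀ p ∈ l, p.2 ≠ 1) ∧ (l.map fun p => GraphProduct.of Γ G p.1 p.2).prod = g

/-- One swap of two adjacent syllables lying in commuting (adjacent) vertex
groups. -/
def SwapStep {V : Type*} (Γ : SimpleGraph V) (G : V → Type*) [∀ v, Group (G v)] :
    List (Σ v, G v) → List (Σ v, G v) → Prop := fun l l' =>
  ∃ (l₁ l₂ : List (Σ v, G v)) (p q : Σ v, G v), Γ.Adj p.1 q.1 ∧
    l = l₁ ++ p :: q :: l₂ ∧ l' = l₁ ++ q :: p :: l₂

/-!
Van der Waerden's trick. If a syllable can be shuffled next to a later syllable of the same vertex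
group, the two merge and the expression was not minimal; so minimal expressions are reduced. To see
that reduced words with the same value are shuffles of each other, let `G v` act on shuffle classes
of reduced words by multiplying into the `G v`-syllable that can be shuffled to the front
(prepending one if there is none). For adjacent `v, v'` these actions commute, so they assemble to
an action of the graph product, and the value of a reduced word `w` maps the class of the empty
word to the class of `w`. That a front syllable is unique up to shuffling the rest comes from the
projection lemma: words whose projections to all pairs of non-adjacent vertices agree are shuffles
of each other.
-/

namespace GraphProduct

open Relation

variable {V : Type*} {Γ : SimpleGraph V} {G : V → Type*}

def projPair [DecidableEq V] (u₁ u₂ : V) (w : List (Σ v, G v)) : List (Σ v, G v) :=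
  w.filter fun x => x.1 = u₁ ∨ x.1 = u₂

theorem exists_eq_append_cons_of_projPair_eq [DecidableEq V] {a : Σ v, G v} {t w' : List (Σ v, G v)}
    (h : ∀ u₁ u₂, ¬ Γ.Adj u₁ u₂ → projPair u₁ u₂ (a :: t) = projPair u₁ u₂ w') :
    ∃ l₁ l₂, w' = l₁ ++ a :: l₂ ∧ ∀ q ∈ l₁, Γ.Adj q.1 a.1 := by
  simp only [projPair] at h
  -- projecting to `a.1` alone locates `a` in `w'`; projecting to `a.1` and a vertex `q.1` not
  -- adjacent to it shows that no `q` precedes `a` there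
  have ha := h a.1 a.1 (Γ.loopless.irrefl _)
  rw [List.filter_cons_of_pos (by simp)] at ha
  obtain ⟨l₁, l₂, rfl, hl₁, -⟩ := List.filter_eq_cons_iff.1 ha.symm
  refine ⟨l₁, l₂, rfl, fun q hq => by_contra fun hqa => ?_⟩
  have hproj := h a.1 q.1 (fun h => hqa h.symm)
  rw [List.filter_cons_of_pos (by simp), List.filter_append] at hproj
  have hqf : q ∈ l₁.filter fun x => x.1 = a.1 ∨ x.1 = q.1 := List.mem_filter.2 ⟨hq, by simp⟩
  obtain ⟨x, s, hx⟩ := List.exists_cons_of_ne_nil (List.ne_nil_of_mem hqf)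
  rw [hx, List.cons_append, List.cons.injEq] at hproj
  have hxl : x ∈ l₁.filter _ := hx ▸ List.mem_cons_self
  exact hl₁ x (List.mem_of_mem_filter hxl) (by simp [← hproj.1])

variable [∀ v, Group (G v)]

theorem SwapStep.symm {w w' : List (Σ v, G v)} (h : SwapStep Γ G w w') : SwapStep Γ G w' w := by
  obtain ⟨l₁, l₂, p, q, hpq, rfl, rfl⟩ := h
  exact ⟨l₁, l₂, q, p, hpq.symm, rfl, rfl⟩

def Shuffle (Γ : SimpleGraph V) : List (Σ v, G v) → List (Σ v, G v) → Prop :=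
  ReflTransGen (SwapStep Γ G)

theorem Shuffle.refl (w : List (Σ v, G v)) : Shuffle Γ w w := ReflTransGen.refl

theorem Shuffle.trans {w w' w'' : List (Σ v, G v)} (h : Shuffle Γ w w')
    (h' : Shuffle Γ w' w'') : Shuffle Γ w w'' :=
  ReflTransGen.trans h h'

theorem Shuffle.symm {w w' : List (Σ v, G v)} (h : Shuffle Γ w w') : Shuffle Γ w' w := by
  induction h with
  | refl => exact ReflTransGen.refl
  | tail _ hs ih => exact (ReflTransGen.single (SwapStep.symm hs)).trans ih

theorem shuffle_equivalence : Equivalence (Shuffle Γ (G := G)) :=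
  ⟨Shuffle.refl, Shuffle.symm, Shuffle.trans⟩

theorem Shuffle.cons (x : Σ v, G v) {w w' : List (Σ v, G v)} (h : Shuffle Γ w w') :
    Shuffle Γ (x :: w) (x :: w') := by
  refine ReflTransGen.lift (List.cons x) (fun _ _ hs => ?_) _ _ h
  obtain ⟨l₁, l₂, p, q, hpq, rfl, rfl⟩ := hs
  exact ⟨x :: l₁, l₂, p, q, hpq, rfl, rfl⟩

theorem Shuffle.perm {w w' : List (Σ v, G v)} (h : Shuffle Γ w w') : w.Perm w' := by
  induction h with
  | refl => rfl
  | tail _ hs ih =>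
    obtain ⟨l₁, l₂, p, q, -, rfl, rfl⟩ := hs
    exact ih.trans ((List.Perm.swap q p l₂).append_left l₁)

theorem shuffle_cons_cons {p q : Σ v, G v} (hpq : Γ.Adj p.1 q.1) (w : List (Σ v, G v)) :
    Shuffle Γ (p :: q :: w) (q :: p :: w) :=
  .single ⟨[], w, p, q, hpq, rfl, rfl⟩

theorem shuffle_append_cons {l₁ : List (Σ v, G v)} {p : Σ v, G v}
    (h : ∀ q ∈ l₁, Γ.Adj q.1 p.1) (l₂ : List (Σ v, G v)) :
    Shuffle Γ (l₁ ++ p :: l₂) (p :: (l₁ ++ l₂)) := by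
  induction l₁ with
  | nil => exact .refl _
  | cons x t ih =>
    have hx := h x List.mem_cons_self
    exact ((ih fun q hq => h q (List.mem_cons_of_mem _ hq)).cons x).trans
      (shuffle_cons_cons hx _)

section Projection

variable [DecidableEq V]

theorem Shuffle.projPair_eq {u₁ u₂ : V} (hu : ¬ Γ.Adj u₁ u₂) {w w' : List (Σ v, G v)}
    (h : Shuffle Γ w w') : projPair u₁ u₂ w = projPair u₁ u₂ w' := by
  simp only [projPair]
  induction h with
  | refl => rfl
  | tail _ hs ih =>
    obtain ⟨l₁, l₂, p, q, hpq, rfl, rfl⟩ := hs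
    refine ih.trans ?_
    have : ¬ ((p.1 = u₁ ∨ p.1 = u₂) ∧ (q.1 = u₁ ∨ q.1 = u₂)) := by
      rintro ⟨hp | hp, hq | hq⟩ <;> rw [hp, hq] at hpq
      exacts [Γ.loopless.irrefl _ hpq, hu hpq, hu hpq.symm, Γ.loopless.irrefl _ hpq]
    by_cases hp : p.1 = u₁ ∨ p.1 = u₂ <;> by_cases hq : q.1 = u₁ ∨ q.1 = u₂ <;>
      simp_all

/-- The projection lemma of partially commutative monoids. -/
theorem shuffle_of_forall_projPair_eq {w w' : List (Σ v, G v)}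
    (h : ∀ u₁ u₂, ¬ Γ.Adj u₁ u₂ → projPair u₁ u₂ w = projPair u₁ u₂ w') : Shuffle Γ w w' := by
  induction w generalizing w' with
  | nil =>
    cases w' with
    | nil => exact .refl _
    | cons x t => simpa [projPair] using h x.1 x.1 (Γ.loopless.irrefl _)
  | cons a t ih =>
    obtain ⟨l₁, l₂, rfl, hl₁⟩ := exists_eq_append_cons_of_projPair_eq h
    have hfront := shuffle_append_cons hl₁ l₂
    refine ((ih fun u₁ u₂ hu => ?_).cons a).trans hfront.symm
    have key := (h u₁ u₂ hu).trans (hfront.projPair_eq hu)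
    by_cases ha : a.1 = u₁ ∨ a.1 = u₂ <;> simpa [projPair, List.filter_cons, ha] using key

end Projection

theorem Shuffle.of_cons_cons {a : Σ v, G v} {r r' : List (Σ v, G v)}
    (h : Shuffle Γ (a :: r) (a :: r')) : Shuffle Γ r r' := by
  classical
  refine shuffle_of_forall_projPair_eq fun u₁ u₂ hu => ?_
  have key := h.projPair_eq hu
  by_cases ha : a.1 = u₁ ∨ a.1 = u₂ <;> simpa [projPair, List.filter_cons, ha] using key

theorem Shuffle.exists_eq_append_cons {w r : List (Σ v, G v)} {a : Σ v, G v}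
    (h : Shuffle Γ w (a :: r)) :
    ∃ l₁ l₂, w = l₁ ++ a :: l₂ ∧ (∀ q ∈ l₁, Γ.Adj q.1 a.1) ∧ Shuffle Γ (l₁ ++ l₂) r := by
  classical
  obtain ⟨l₁, l₂, rfl, hl₁⟩ :=
    exists_eq_append_cons_of_projPair_eq fun u₁ u₂ hu => (h.projPair_eq hu).symm
  exact ⟨l₁, l₂, rfl, hl₁, ((shuffle_append_cons hl₁ l₂).symm.trans h).of_cons_cons⟩

theorem Shuffle.eq_of_cons_cons {v : V} {b c : G v} {r r' : List (Σ v, G v)}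
    (h : Shuffle Γ (⟨v, b⟩ :: r) (⟨v, c⟩ :: r')) : b = c ∧ Shuffle Γ r r' := by
  classical
  have := h.projPair_eq (Γ.loopless.irrefl v)
  simp only [projPair, List.filter_cons, true_or, decide_true, ↓reduceIte, List.cons.injEq,
    Sigma.mk.injEq, heq_eq_eq, true_and] at this
  obtain ⟨rfl, -⟩ := this
  exact ⟨rfl, h.of_cons_cons⟩

def wordProd (Γ : SimpleGraph V) (w : List (Σ v, G v)) : GraphProduct Γ G :=
  (w.map fun p => of Γ G p.1 p.2).prod

@[simp]
theorem wordProd_cons (p : Σ v, G v) (w : List (Σ v, G v)) :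
    wordProd Γ (p :: w) = of Γ G p.1 p.2 * wordProd Γ w :=
  List.prod_cons

theorem of_mul_of_comm {v u : V} (h : Γ.Adj v u) (a : G v) (b : G u) :
    of Γ G v a * of Γ G u b = of Γ G u b * of Γ G v a := by
  rw [← commutatorElement_eq_one_iff_mul_comm, commutatorElement_def]
  exact (QuotientGroup.eq_one_iff _).2 (Subgroup.subset_normalClosure ⟨v, u, a, b, h, rfl⟩)

theorem Shuffle.wordProd_eq {w w' : List (Σ v, G v)} (h : Shuffle Γ w w') :
    wordProd Γ w = wordProd Γ w' := by
  induction h with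
  | refl => rfl
  | tail _ hs ih =>
    obtain ⟨l₁, l₂, p, q, hpq, rfl, rfl⟩ := hs
    rw [ih]
    simp only [wordProd, List.map_append, List.map_cons, List.prod_append, List.prod_cons]
    rw [← mul_assoc (of Γ G p.1 p.2), of_mul_of_comm hpq, mul_assoc]

open scoped Classical in
noncomputable def consSyllable (v : V) (a : G v) (w : List (Σ v, G v)) : List (Σ v, G v) :=
  if a = 1 then w else ⟨v, a⟩ :: w

@[simp]
theorem consSyllable_one (v : V) (w : List (Σ v, G v)) : consSyllable v 1 w = w := if_pos rfl

theorem consSyllable_of_ne_one {v : V} {a : G v} (ha : a ≠ 1) (w : List (Σ v, G v)) :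
    consSyllable v a w = ⟨v, a⟩ :: w :=
  if_neg ha

theorem wordProd_consSyllable (v : V) (a : G v) (w : List (Σ v, G v)) :
    wordProd Γ (consSyllable v a w) = of Γ G v a * wordProd Γ w := by
  by_cases ha : a = 1
  · simp [ha]
  · simp [consSyllable_of_ne_one ha]

theorem length_consSyllable_le (v : V) (a : G v) (w : List (Σ v, G v)) :
    (consSyllable v a w).length ≤ w.length + 1 := by
  by_cases ha : a = 1
  · simp [ha]
  · simp [consSyllable_of_ne_one ha]

theorem ne_one_of_mem_consSyllable {v : V} {a : G v} {w : List (Σ v, G v)}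
    (hw : ∀ p ∈ w, p.2 ≠ 1) : ∀ p ∈ consSyllable v a w, p.2 ≠ 1 := by
  by_cases ha : a = 1
  · simpa [ha] using hw
  · simpa [consSyllable_of_ne_one ha] using ⟨ha, hw⟩

theorem Shuffle.consSyllable {w w' : List (Σ v, G v)} (h : Shuffle Γ w w') (v : V) (a : G v) :
    Shuffle Γ (consSyllable v a w) (consSyllable v a w') := by
  by_cases ha : a = 1
  · simpa [ha] using h
  · simpa [consSyllable_of_ne_one ha] using h.cons _

theorem shuffle_consSyllable_comm {v v' : V} (h : Γ.Adj v v') (a : G v) (a' : G v')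
    (w : List (Σ v, G v)) :
    Shuffle Γ (consSyllable v a (consSyllable v' a' w))
      (consSyllable v' a' (consSyllable v a w)) := by
  by_cases ha : a = 1
  · simpa [ha] using Shuffle.refl _
  by_cases ha' : a' = 1
  · simpa [ha'] using Shuffle.refl _
  simpa [consSyllable_of_ne_one, ha, ha'] using
    shuffle_cons_cons (p := ⟨v, a⟩) (q := ⟨v', a'⟩) h w

def Frontable (Γ : SimpleGraph V) (v : V) (w : List (Σ v, G v)) : Prop :=
  ∃ (b : G v) (r : List (Σ v, G v)), Shuffle Γ w (⟨v, b⟩ :: r)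

theorem Frontable.of_shuffle {v : V} {w w' : List (Σ v, G v)} (h : Shuffle Γ w w')
    (hf : Frontable Γ v w') : Frontable Γ v w :=
  let ⟨b, r, hs⟩ := hf
  ⟨b, r, h.trans hs⟩

theorem Frontable.of_cons {v : V} {x : Σ v, G v} {w : List (Σ v, G v)}
    (hf : Frontable Γ v (x :: w)) (hx : x.1 ≠ v) : Frontable Γ v w := by
  obtain ⟨b, r, hs⟩ := hf
  obtain ⟨l₁, l₂, he, hl₁, -⟩ := hs.exists_eq_append_cons
  cases l₁ with
  | nil => exact absurd (congrArg Sigma.fst (List.cons.inj he).1) hx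
  | cons y l₁ =>
    obtain ⟨-, rfl⟩ := List.cons.inj he
    exact ⟨b, l₁ ++ l₂,
      shuffle_append_cons (fun q hq => hl₁ q (List.mem_cons_of_mem _ hq)) l₂⟩

theorem Frontable.cons_of_adj {v : V} {x : Σ v, G v} {w : List (Σ v, G v)}
    (hx : Γ.Adj x.1 v) (hf : Frontable Γ v w) : Frontable Γ v (x :: w) :=
  let ⟨b, r, hs⟩ := hf
  ⟨b, x :: r, (hs.cons x).trans (shuffle_cons_cons hx r)⟩

theorem Frontable.of_consSyllable {u v : V} {a : G u} {w : List (Σ v, G v)}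
    (hf : Frontable Γ v (consSyllable u a w)) (hu : u ≠ v) : Frontable Γ v w := by
  by_cases ha : a = 1
  · simpa [ha] using hf
  · exact (consSyllable_of_ne_one ha w ▸ hf).of_cons hu

theorem Frontable.consSyllable {u v : V} (hu : Γ.Adj u v) (a : G u) {w : List (Σ v, G v)}
    (hf : Frontable Γ v w) : Frontable Γ v (consSyllable u a w) := by
  by_cases ha : a = 1
  · simpa [ha] using hf
  · exact consSyllable_of_ne_one ha w ▸ hf.cons_of_adj hu

def Reduced (Γ : SimpleGraph V) : List (Σ v, G v) → Prop
  | [] => True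
  | p :: w => p.2 ≠ 1 ∧ ¬ Frontable Γ p.1 w ∧ Reduced Γ w

theorem Reduced.swap {p q : Σ v, G v} (hpq : Γ.Adj p.1 q.1) :
    ∀ {l₁ l₂ : List (Σ v, G v)},
      Reduced Γ (l₁ ++ p :: q :: l₂) → Reduced Γ (l₁ ++ q :: p :: l₂)
  | [], _, ⟨hp, hpf, hq, hqf, h⟩ =>
    ⟨hq, fun hf => hqf (hf.of_cons hpq.ne), hp, fun hf => hpf (hf.cons_of_adj hpq.symm), h⟩
  | _ :: _, _, ⟨hx, hxf, h⟩ =>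
    ⟨hx, fun hf => hxf (hf.of_shuffle (ReflTransGen.single ⟨_, _, p, q, hpq, rfl, rfl⟩)),
      Reduced.swap hpq h⟩

theorem Reduced.of_shuffle {w w' : List (Σ v, G v)} (h : Shuffle Γ w w') (hw : Reduced Γ w) :
    Reduced Γ w' := by
  induction h with
  | refl => exact hw
  | tail _ hs ih =>
    obtain ⟨l₁, l₂, p, q, hpq, rfl, rfl⟩ := hs
    exact ih.swap hpq

theorem Reduced.of_consSyllable {v : V} {a : G v} {w : List (Σ v, G v)}
    (h : Reduced Γ (consSyllable v a w)) : Reduced Γ w := by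
  by_cases ha : a = 1
  · simpa [ha] using h
  · exact (consSyllable_of_ne_one ha w ▸ h).2.2

theorem Reduced.consSyllable {v : V} {w : List (Σ v, G v)} (hw : Reduced Γ w)
    (hf : ¬ Frontable Γ v w) (a : G v) : Reduced Γ (consSyllable v a w) := by
  by_cases ha : a = 1
  · simpa [ha] using hw
  · exact consSyllable_of_ne_one ha w ▸ ⟨ha, hf, hw⟩

/-- The offending syllable merges with the later syllable of its vertex group that can be
shuffled next to it. -/
theorem exists_shorter_of_not_reduced {w : List (Σ v, G v)} (hw : ∀ p ∈ w, p.2 ≠ 1)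
    (hr : ¬ Reduced Γ w) :
    ∃ m : List (Σ v, G v), (∀ p ∈ m, p.2 ≠ 1) ∧ wordProd Γ m = wordProd Γ w ∧
      m.length < w.length := by
  induction w with
  | nil => exact absurd trivial hr
  | cons p t ih =>
    obtain ⟨v, a⟩ := p
    have ht : ∀ q ∈ t, q.2 ≠ 1 := fun q hq => hw q (List.mem_cons_of_mem _ hq)
    by_cases hf : Frontable Γ v t
    · obtain ⟨b, r, hs⟩ := hf
      refine ⟨consSyllable v (a * b) r, ne_one_of_mem_consSyllable fun q hq =>
          ht q (hs.perm.mem_iff.2 (List.mem_cons_of_mem _ hq)), ?_, ?_⟩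
      · simp [wordProd_consSyllable, hs.wordProd_eq, mul_assoc]
      · have htr : t.length = r.length + 1 := by simpa using hs.perm.length_eq
        have := length_consSyllable_le v (a * b) r
        simp only [List.length_cons]
        omega
    · obtain ⟨m, hm, hprod, hlen⟩ := ih ht fun ht' => hr ⟨hw _ List.mem_cons_self, hf, ht'⟩
      refine ⟨⟨v, a⟩ :: m, ?_, by simp [hprod], by simpa⟩
      simpa using ⟨hw _ List.mem_cons_self, hm⟩

theorem _root_.IsExpr.reduced_of_minimal {g : GraphProduct Γ G} {l : List (Σ v, G v)}
    (hl : IsExpr Γ G g l) (hmin : ∀ m, IsExpr Γ G g m → l.length ≤ m.length) :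
    Reduced Γ l := by
  by_contra hr
  obtain ⟨m, hm, hprod, hlen⟩ := exists_shorter_of_not_reduced hl.1 hr
  exact (hmin m ⟨hm, hprod.trans hl.2⟩).not_gt hlen

/-- `b` is the `G v`-syllable that can be shuffled to the front of `w` (`b = 1` if there is none),
and `r` is what remains. -/
def SplitsAs (Γ : SimpleGraph V) (v : V) (w : List (Σ v, G v)) (b : G v) (r : List (Σ v, G v)) :
    Prop :=
  Shuffle Γ w (consSyllable v b r) ∧ ¬ Frontable Γ v r

theorem SplitsAs.of_shuffle {v : V} {w w' r : List (Σ v, G v)} {b : G v} (h : Shuffle Γ w w')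
    (hs : SplitsAs Γ v w' b r) : SplitsAs Γ v w b r :=
  ⟨h.trans hs.1, hs.2⟩

theorem splitsAs_consSyllable {v : V} {r : List (Σ v, G v)} (hr : ¬ Frontable Γ v r) (a : G v) :
    SplitsAs Γ v (consSyllable v a r) a r :=
  ⟨.refl _, hr⟩

theorem splitsAs_self {v : V} {w : List (Σ v, G v)} (hw : ¬ Frontable Γ v w) :
    SplitsAs Γ v w 1 w := by
  simpa using splitsAs_consSyllable hw 1

theorem SplitsAs.unique {v : V} {w r r' : List (Σ v, G v)} {b b' : G v}
    (h : SplitsAs Γ v w b r) (h' : SplitsAs Γ v w b' r') : b = b' ∧ Shuffle Γ r r' := by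
  have hs := h.1.symm.trans h'.1
  by_cases hb : b = 1 <;> by_cases hb' : b' = 1
  · subst hb hb'
    simpa using hs
  · rw [hb, consSyllable_one, consSyllable_of_ne_one hb'] at hs
    exact absurd ⟨b', r', hs⟩ h.2
  · rw [hb', consSyllable_one, consSyllable_of_ne_one hb] at hs
    exact absurd ⟨b, r, hs.symm⟩ h'.2
  · rw [consSyllable_of_ne_one hb, consSyllable_of_ne_one hb'] at hs
    exact hs.eq_of_cons_cons

theorem Reduced.exists_splitsAs {w : List (Σ v, G v)} (hw : Reduced Γ w) (v : V) :
    ∃ b r, SplitsAs Γ v w b r := by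
  by_cases hf : Frontable Γ v w
  · obtain ⟨b, r, hs⟩ := hf
    obtain ⟨hb, hr, -⟩ := hw.of_shuffle hs
    exact ⟨b, r, by rwa [consSyllable_of_ne_one hb], hr⟩
  · exact ⟨1, w, splitsAs_self hf⟩

theorem SplitsAs.reduced_consSyllable {v : V} {w r : List (Σ v, G v)} {b : G v}
    (h : SplitsAs Γ v w b r) (hw : Reduced Γ w) (a : G v) : Reduced Γ (consSyllable v a r) :=
  (hw.of_shuffle h.1).of_consSyllable.consSyllable h.2 a

theorem SplitsAs.consSyllable_of_adj {u v : V} (huv : Γ.Adj u v) {w r : List (Σ v, G v)}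
    {c : G v} (h : SplitsAs Γ v w c r) (a : G u) :
    SplitsAs Γ v (consSyllable u a w) c (consSyllable u a r) :=
  ⟨(h.1.consSyllable u a).trans (shuffle_consSyllable_comm huv a c r),
    fun hf => h.2 (hf.of_consSyllable huv.ne)⟩

variable (Γ G) in
def ShuffleClass : Type _ :=
  Quotient (Setoid.comap (Subtype.val : {w : List (Σ v, G v) // Reduced Γ w} → _)
    ⟨Shuffle Γ, shuffle_equivalence⟩)

namespace ShuffleClass

def mk (w : List (Σ v, G v)) (hw : Reduced Γ w) : ShuffleClass Γ G := Quotient.mk _ ⟨w, hw⟩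

theorem mk_eq_mk {w w' : List (Σ v, G v)} {hw : Reduced Γ w} {hw' : Reduced Γ w'} :
    mk w hw = mk w' hw' ↔ Shuffle Γ w w' :=
  Quotient.eq

theorem ind {P : ShuffleClass Γ G → Prop} (h : ∀ w hw, P (mk w hw)) (x : ShuffleClass Γ G) :
    P x :=
  Quotient.ind (fun w => h w.1 w.2) x

noncomputable def frontSplit (v : V) (w : {w : List (Σ v, G v) // Reduced Γ w}) :
    G v × List (Σ v, G v) :=
  have h := w.2.exists_splitsAs v
  (h.choose, h.choose_spec.choose)

theorem splitsAs_frontSplit (v : V) (w : {w : List (Σ v, G v) // Reduced Γ w}) :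
    SplitsAs Γ v w.1 (frontSplit v w).1 (frontSplit v w).2 :=
  (w.2.exists_splitsAs v).choose_spec.choose_spec

noncomputable def act (v : V) (g : G v) : ShuffleClass Γ G → ShuffleClass Γ G :=
  Quotient.lift
    (fun w => mk _ ((splitsAs_frontSplit v w).reduced_consSyllable w.2 (g * (frontSplit v w).1)))
    (fun w w' hww' => by
      obtain ⟨hb, hr⟩ :=
        (splitsAs_frontSplit v w).unique ((splitsAs_frontSplit v w').of_shuffle hww')
      rw [mk_eq_mk, hb]
      exact hr.consSyllable v _)

theorem act_mk {v : V} {w r : List (Σ v, G v)} {b : G v} (hw : Reduced Γ w)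
    (h : SplitsAs Γ v w b r) (g : G v) :
    act v g (mk w hw) = mk (consSyllable v (g * b) r) (h.reduced_consSyllable hw _) := by
  obtain ⟨hb, hr⟩ := (splitsAs_frontSplit v ⟨w, hw⟩).unique h
  rw [act, mk, Quotient.lift_mk, mk_eq_mk, hb]
  exact hr.consSyllable v _

theorem act_one (v : V) : act v (1 : G v) = (id : ShuffleClass Γ G → ShuffleClass Γ G) := by
  funext x
  induction x using ind with
  | h w hw =>
    obtain ⟨b, r, h⟩ := hw.exists_splitsAs v
    rw [act_mk hw h, id, mk_eq_mk, one_mul]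
    exact h.1.symm

theorem act_mul {v : V} (g g' : G v) :
    act v (g * g') = (act v g ∘ act v g' : ShuffleClass Γ G → ShuffleClass Γ G) := by
  funext x
  induction x using ind with
  | h w hw =>
    obtain ⟨b, r, h⟩ := hw.exists_splitsAs v
    rw [Function.comp_apply, act_mk hw h, act_mk hw h, act_mk _ (splitsAs_consSyllable h.2 _),
      mul_assoc]

theorem act_comm {v v' : V} (hvv' : Γ.Adj v v') (g : G v) (g' : G v') :
    (act v g ∘ act v' g' : ShuffleClass Γ G → ShuffleClass Γ G) = act v' g' ∘ act v g := by
  funext x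
  induction x using ind with
  | h w hw =>
    obtain ⟨b, t, hb⟩ := hw.exists_splitsAs v
    obtain ⟨c, s, hc⟩ := (hw.of_shuffle hb.1).of_consSyllable.exists_splitsAs v'
    -- `w` is a shuffle of `b`, `c` and `s`, where neither a `G v`- nor a `G v'`-syllable can be
    -- shuffled to the front of `s`
    have hs : ¬ Frontable Γ v s := fun hf =>
      hb.2 ((hf.consSyllable hvv'.symm c).of_shuffle hc.1)
    have hwv : SplitsAs Γ v w b (consSyllable v' c s) := ⟨hb.1.trans (hc.1.consSyllable v b),
      fun hf => hs (hf.of_consSyllable hvv'.ne')⟩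
    have hwv' : SplitsAs Γ v' w c (consSyllable v b s) :=
      (hc.consSyllable_of_adj hvv' b).of_shuffle hb.1
    rw [Function.comp_apply, Function.comp_apply, act_mk hw hwv', act_mk hw hwv,
      act_mk _ ((splitsAs_consSyllable hs b).consSyllable_of_adj hvv'.symm _),
      act_mk _ ((splitsAs_consSyllable hc.2 c).consSyllable_of_adj hvv' _), mk_eq_mk]
    exact shuffle_consSyllable_comm hvv' _ _ s

end ShuffleClass

open ShuffleClass

variable (Γ) in
noncomputable def vertexToEnd (v : V) : G v →* Function.End (ShuffleClass Γ G) where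
  toFun := act v
  map_one' := act_one v
  map_mul' := act_mul

variable (Γ G) in
noncomputable def toEnd : GraphProduct Γ G →* Function.End (ShuffleClass Γ G) :=
  QuotientGroup.lift _ (Monoid.CoprodI.lift (vertexToEnd Γ)) <| by
    refine Subgroup.normalClosure_le_normal ?_
    rintro _ ⟨v, u, a, b, hvu, rfl⟩
    have hcomm : vertexToEnd Γ v a * vertexToEnd Γ u b = vertexToEnd Γ u b * vertexToEnd Γ v a :=
      act_comm hvu a b
    rw [SetLike.mem_coe, MonoidHom.mem_ker]
    simp only [map_mul, ← map_inv, Monoid.CoprodI.lift_of]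
    rw [hcomm, mul_assoc (vertexToEnd Γ u b), ← map_mul, mul_inv_cancel, map_one, mul_one,
      ← map_mul, mul_inv_cancel, map_one]

theorem toEnd_of (v : V) (a : G v) : toEnd Γ G (of Γ G v a) = vertexToEnd Γ v a :=
  Monoid.CoprodI.lift_of _ _

theorem toEnd_wordProd_mk_nil {w : List (Σ v, G v)} (hw : Reduced Γ w) :
    toEnd Γ G (wordProd Γ w) (mk [] trivial) = mk w hw := by
  induction w with
  | nil => rfl
  | cons p t ih =>
    obtain ⟨hp, hf, ht⟩ := hw
    rw [wordProd_cons, map_mul]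
    refine (congrArg (toEnd Γ G (of Γ G p.1 p.2)) (ih ht)).trans ?_
    rw [toEnd_of]
    refine (act_mk ht (splitsAs_self hf) p.2).trans (mk_eq_mk.2 ?_)
    rw [mul_one, consSyllable_of_ne_one hp]
    exact .refl _

theorem Reduced.shuffle_of_wordProd_eq {w w' : List (Σ v, G v)} (hw : Reduced Γ w)
    (hw' : Reduced Γ w') (h : wordProd Γ w = wordProd Γ w') : Shuffle Γ w w' :=
  mk_eq_mk.1 <| (toEnd_wordProd_mk_nil hw).symm.trans (h ▸ toEnd_wordProd_mk_nil hw')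

end GraphProduct

theorem graphProduct_syllable_length_well_defined_general {V : Type}
    (Γ : SimpleGraph V) (G : V → Type) [∀ v, Group (G v)]
    (g : GraphProduct Γ G) (l l' : List (Σ v, G v))
    (hl : IsExpr Γ G g l) (hl' : IsExpr Γ G g l')
    (hmin : ∀ m, IsExpr Γ G g m → l.length ≤ m.length)
    (hmin' : ∀ m, IsExpr Γ G g m → l'.length ≤ m.length) :
    l.length = l'.length ∧ Relation.ReflTransGen (SwapStep Γ G) l l' :=
  ⟨(hmin l' hl').antisymm (hmin' l hl),
    (hl.reduced_of_minimal hmin).shuffle_of_wordProd_eq (hl'.reduced_of_minimal hmin')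
      (hl.2.trans hl'.2.symm)⟩

/-- Any two minimal-length expressions of a nontrivial element of a graph
product have the same length, and are related by a sequence of swaps of
adjacent syllables from commuting vertex groups. -/
theorem graphProduct_syllable_length_well_defined {V : Type} [Fintype V]
    (Γ : SimpleGraph V) (G : V → Type) [∀ v, Group (G v)]
    (g : GraphProduct Γ G) (hg : g ≠ 1) (l l' : List (Σ v, G v))
    (hl : IsExpr Γ G g l) (hl' : IsExpr Γ G g l')
    (hmin : ∀ m, IsExpr Γ G g m → l.length ≤ m.length)
    (hmin' : ∀ m, IsExpr Γ G g m → l'.length ≤ m.length) :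
    l.length = l'.length ∧ Relation.ReflTransGen (SwapStep Γ G) l l' :=
  graphProduct_syllable_length_well_defined_general Γ G g l l' hl hl' hmin hmin'
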